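/- arXiv:2405.19412 — 3 statements merged into one kernel-verified Lean document; each statement's English description precedes it below -/
import Mathlib

section
/- Let u_a(t) = exp(-a·t/ln²(t)) for t > 1 and a > 0. For all integers k ≥ 0 and all t ≥ e⁴ such that a·t/ln²(t) ≥ 2k+2, one has ∫_t^∞ τ^k · u_a(τ) dτ ≤ ((2k+3)/a) · t^{2k+2} · u_a(t). -/
/-!
With `L = log y`, the comparison function `G(y) = y^k L² u_a(y)` satisfies
`-G'(y) = y^k u_a(y) · (a(L - 2)/L - (kL² + 2L)/y)`. For `y ≥ t` the bracket is at least
`a/(4k+4)`: this uses `L ≥ 4` and `ay/L² ≥ 2k + 2`, which propagates from `t` to all larger `y`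
because `y/L²` is increasing beyond `e²`. Hence `∫_t^∞ τ^k u_a ≤ (4k+4)/a · G(t)`, and
`L² ≤ 4t`, `t ≥ 8` turn this into the stated bound.
-/

open Real Set Filter MeasureTheory Topology

theorem integral_Ioi_le_of_hasDerivAt_neg_of_le {f g G : ℝ → ℝ} {t : ℝ}
    (hG : ∀ x ∈ Ici t, HasDerivAt G (-g x) x) (hf : ∀ b, IntegrableOn f (Icc t b))
    (hf0 : ∀ x ∈ Ioi t, 0 ≤ f x) (hfg : ∀ x ∈ Ioi t, f x ≤ g x)
    (hG0 : ∀ x ∈ Ioi t, 0 ≤ G x) :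
    ∫ x in Ioi t, f x ≤ G t := by
  have hbound : ∀ b ∈ Ioi t, ∫ x in t..b, f x ≤ G t := by
    intro b hb
    have hFTC := intervalIntegral.integral_le_sub_of_hasDeriv_right_of_le (g := fun x => -G x)
      hb.le (fun x hx => (hG x hx.1).continuousAt.continuousWithinAt.neg)
      (fun x hx => (hG x (mem_Ici.2 hx.1.le)).neg.hasDerivWithinAt) (hf b)
      (fun x hx => by simpa only [neg_neg] using hfg x hx.1)
    linarith [hG0 b hb]
  have hnorm : ∀ b ∈ Ioi t, ∫ x in t..b, ‖f x‖ = ∫ x in t..b, f x := by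
    intro b hb
    simp only [intervalIntegral.integral_of_le hb.le]
    exact setIntegral_congr_fun measurableSet_Ioc fun x hx => norm_of_nonneg (hf0 x hx.1)
  have hint : IntegrableOn f (Ioi t) :=
    integrableOn_Ioi_of_intervalIntegral_norm_bounded (G t) t
      (fun b => (hf b).mono_set Ioc_subset_Icc_self) tendsto_id
      ((eventually_gt_atTop t).mono fun b hb => (hnorm b hb).trans_le (hbound b hb))
  exact le_of_tendsto (intervalIntegral_tendsto_integral_Ioi t hint tendsto_id)
    ((eventually_gt_atTop t).mono hbound)

theorem monotoneOn_div_sq_log : MonotoneOn (fun x : ℝ => x / log x ^ 2) (Ici (exp 2)) := by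
  intro x hx y hy hxy
  have hpos : ∀ z ∈ Ici (exp 2), 0 < log z / √z := fun z hz => by
    have : 2 ≤ log z := by simpa using log_le_log (exp_pos 2) hz
    have := sqrt_pos.2 ((exp_pos 2).trans_le hz)
    positivity
  have hsq : ∀ z ∈ Ici (exp 2), z / log z ^ 2 = ((log z / √z) ^ 2)⁻¹ := fun z hz => by
    rw [div_pow, sq_sqrt ((exp_pos 2).trans_le hz).le, inv_div]
  simp only [hsq x hx, hsq y hy]
  exact inv_anti₀ (pow_pos (hpos y hy) 2)
    (pow_le_pow_left₀ (hpos y hy).le (log_div_sqrt_antitoneOn hx hy hxy) 2)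

theorem mul_sq_log_le_of_le_div_sq_log {a c t x : ℝ} (ha : 0 ≤ a) (ht : exp 2 ≤ t)
    (hx : t ≤ x) (hc : c ≤ a * t / log t ^ 2) : c * log x ^ 2 ≤ a * x := by
  have hlog : 2 ≤ log x := by simpa using log_le_log (exp_pos 2) (ht.trans hx)
  have hmono := monotoneOn_div_sq_log ht (ht.trans hx) hx
  have h : c ≤ a * x / log x ^ 2 :=
    hc.trans (by simpa only [mul_div_assoc] using mul_le_mul_of_nonneg_left hmono ha)
  rwa [le_div_iff₀ (by positivity)] at h

theorem sq_log_le_four_mul {x : ℝ} (hx : 1 ≤ x) : log x ^ 2 ≤ 4 * x := by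
  have hlog : log x ≤ 2 * √x := by
    have := log_le_rpow_div (zero_le_one.trans hx) one_half_pos
    rw [← sqrt_eq_rpow] at this
    linarith
  calc log x ^ 2 ≤ (2 * √x) ^ 2 := pow_le_pow_left₀ (log_nonneg hx) hlog 2
    _ = 4 * x := by rw [mul_pow, sq_sqrt (zero_le_one.trans hx)]; norm_num

noncomputable def tailDecay (a : ℝ) (k : ℕ) (y : ℝ) : ℝ :=
  a * (log y - 2) / log y - (k * log y ^ 2 + 2 * log y) / y

theorem hasDerivAt_pow_mul_sq_log_mul_exp (a : ℝ) (k : ℕ) {y : ℝ} (hy : 0 < y)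
    (hlog : log y ≠ 0) :
    HasDerivAt (fun x => x ^ k * log x ^ 2 * exp (-a * x / log x ^ 2))
      (-(y ^ k * exp (-a * y / log y ^ 2) * tailDecay a k y)) y := by
  have hpow : HasDerivAt (fun x => x ^ k) (k * y ^ k / y) y := by
    refine (hasDerivAt_pow k y).congr_deriv ?_
    rcases k with _ | k
    · simp
    · rw [pow_succ, Nat.add_sub_cancel]
      field_simp
  have hlog2 := (hasDerivAt_log hy.ne').fun_pow 2
  have hexp := (((hasDerivAt_id y).const_mul (-a)).fun_div hlog2 (pow_ne_zero 2 hlog)).exp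
  refine ((hpow.fun_mul hlog2).fun_mul hexp).congr_deriv ?_
  simp only [tailDecay, id, Nat.cast_ofNat, Nat.add_one_sub_one, pow_one]
  field_simp
  ring

theorem le_mul_tailDecay {a y : ℝ} (k : ℕ) (hy : 0 < y) (hlog : 4 ≤ log y)
    (hay : (2 * k + 2) * log y ^ 2 ≤ a * y) :
    a ≤ (4 * k + 4) * tailDecay a k y := by
  set L := log y
  have hL : 0 < L := by linarith
  rw [tailDecay, div_sub_div _ _ hL.ne' hy.ne', mul_div_assoc', le_div_iff₀ (by positivity)]
  have hk : (0 : ℝ) ≤ k := k.cast_nonneg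
  -- The slack is `ay((4k+3)L - 8k - 8) - (4k+4)(kL³ + 2L²)`, and `ay ≥ (2k+2)L²` bounds it
  -- below by `(2k+2)L²((2k+3)L - 8k - 12) ≥ 0`.
  have h₁ : 0 ≤ (4 * k + 3) * L - 8 * k - 8 := by nlinarith
  have h₂ : 0 ≤ (2 * k + 3) * L - 8 * k - 12 := by nlinarith
  nlinarith [mul_le_mul_of_nonneg_right hay h₁,
    mul_nonneg (by positivity : (0 : ℝ) ≤ (2 * k + 2) * L ^ 2) h₂]

theorem continuousOn_pow_mul_exp_div_sq_log (a : ℝ) (k : ℕ) :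
    ContinuousOn (fun τ : ℝ => τ ^ k * exp (-a * τ / log τ ^ 2)) (Ioi 1) := fun x hx =>
  ContinuousAt.continuousWithinAt <| by
    have hx : 1 < x := hx
    have hlog : log x ≠ 0 := (log_pos hx).ne'
    fun_prop (disch := simp [(zero_lt_one.trans hx).ne', hlog])

theorem pow_mul_exp_le_mul_tailDecay {a y : ℝ} (k : ℕ) (ha : 0 < a) (hy : 0 < y)
    (hlog : 4 ≤ log y) (hay : (2 * k + 2) * log y ^ 2 ≤ a * y) :
    y ^ k * exp (-a * y / log y ^ 2) ≤
      (4 * k + 4) / a * (y ^ k * exp (-a * y / log y ^ 2) * tailDecay a k y) := by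
  have hdecay := le_mul_tailDecay k hy hlog hay
  rw [div_mul_eq_mul_div, le_div_iff₀ ha]
  linarith [mul_le_mul_of_nonneg_left hdecay
    (by positivity : 0 ≤ y ^ k * exp (-a * y / log y ^ 2))]

theorem mul_pow_mul_sq_log_le {t : ℝ} (k : ℕ) (ht : 8 ≤ t) :
    (4 * k + 4) * (t ^ k * log t ^ 2) ≤ (2 * k + 3) * t ^ (2 * k + 2) := by
  have ht1 : 8 ≤ t ^ (k + 1) := ht.trans (le_self_pow₀ (by linarith) k.succ_ne_zero)
  have hk : (0 : ℝ) ≤ k := k.cast_nonneg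
  calc (4 * k + 4) * (t ^ k * log t ^ 2) ≤ (4 * k + 4) * (t ^ k * (4 * t)) := by
        gcongr
        exact sq_log_le_four_mul (by linarith)
    _ = (16 * k + 16) * t ^ (k + 1) := by ring
    _ ≤ ((2 * k + 3) * t ^ (k + 1)) * t ^ (k + 1) := by gcongr; nlinarith
    _ = (2 * k + 3) * t ^ (2 * k + 2) := by ring

/-- Tail integral bound for `u_a(t) = exp(-a·t/ln²(t))`: for integers `k ≥ 0` and
`t ≥ e⁴` with `a·t/ln²(t) ≥ 2k+2`,
`∫_t^∞ τ^k u_a(τ) dτ ≤ ((2k+3)/a) t^(2k+2) u_a(t)`. -/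
theorem integral_ua_tail_bound (a : ℝ) (ha : 0 < a) (k : ℕ) (t : ℝ)
    (ht : Real.exp 4 ≤ t)
    (hkt : (2 * k + 2 : ℝ) ≤ a * t / (Real.log t) ^ 2) :
    ∫ τ in Set.Ioi t, τ ^ k * Real.exp (-a * τ / (Real.log τ) ^ 2) ≤
      ((2 * k + 3 : ℝ) / a) * t ^ (2 * k + 2) * Real.exp (-a * t / (Real.log t) ^ 2) := by
  have hpos : ∀ x, t ≤ x → 0 < x := fun x hx => (exp_pos 4).trans_le (ht.trans hx)
  have hlog : ∀ x, t ≤ x → 4 ≤ log x := fun x hx => by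
    simpa using log_le_log (exp_pos 4) (ht.trans hx)
  have hay : ∀ x, t ≤ x → (2 * k + 2) * log x ^ 2 ≤ a * x := fun x hx =>
    mul_sq_log_le_of_le_div_sq_log ha.le ((exp_le_exp.2 (by norm_num)).trans ht) hx hkt
  have hint := integral_Ioi_le_of_hasDerivAt_neg_of_le
    (G := fun x => (4 * k + 4) / a * (x ^ k * log x ^ 2 * exp (-a * x / log x ^ 2)))
    (fun x hx => ((hasDerivAt_pow_mul_sq_log_mul_exp a k (hpos x hx)
      (four_pos.trans_le (hlog x hx)).ne').const_mul _).congr_deriv (mul_neg _ _))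
    (fun b => ((continuousOn_pow_mul_exp_div_sq_log a k).mono fun x hx =>
      (one_lt_exp_iff.2 four_pos).trans_le (ht.trans hx.1)).integrableOn_Icc)
    (fun x hx => by have := hpos x hx.le; positivity)
    (fun x hx => pow_mul_exp_le_mul_tailDecay k ha (hpos x hx.le) (hlog x hx.le) (hay x hx.le))
    (fun x hx => by have := hpos x hx.le; positivity)
  have ht8 : (8 : ℝ) ≤ t := by linarith [quadratic_le_exp_of_nonneg (show (0 : ℝ) ≤ 4 by norm_num)]
  calc _ ≤ (4 * k + 4) / a * (t ^ k * log t ^ 2 * exp (-a * t / log t ^ 2)) := hint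
    _ = (4 * k + 4) * (t ^ k * log t ^ 2) / a * exp (-a * t / log t ^ 2) := by ring
    _ ≤ (2 * k + 3) * t ^ (2 * k + 2) / a * exp (-a * t / log t ^ 2) := by
      gcongr ?_ / a * _
      exact mul_pow_mul_sq_log_le k ht8
    _ = _ := by ring
end

section
/- Let F : ℝ → ℝ be integrable with ∫_ℝ |F(t)| dt ≤ c₂, and suppose ∫_{|t'|>t} |F(t')| dt' ≤ c'·η_a(t) for all t ≥ 0. Let g : ℝ → [0,∞) satisfy g(t) ≤ min(2M, c·M·e^{μ(v|t| - d)}) for all t, where M, c, μ, v, d > 0. Then ∫_ℝ |F(t)|·g(t) dt ≤ C·M·η_a(d/(2v)) for a constant C depending only on c, c', c₂, μ, v, a (and not on d or M). -/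
/-!
Split the integral at `|t| = d / (2v)`. On the far region use `g ≤ 2M` and the tail bound for `F`;
on the near region the light-cone bound gives `g ≤ cM e^{-μd/2}`, and `e^{-μd/2}` is at most a
constant times `η_a(d/(2v))` because `a s / log²(e² + s) ≤ a e^{√(a/(μv))} + μ v s`.
-/

open MeasureTheory Real

noncomputable def eta (a x : ℝ) : ℝ := exp (-a * x / log (exp 2 + x) ^ 2)

lemma two_le_log_exp_two_add {s : ℝ} (hs : 0 ≤ s) : 2 ≤ log (exp 2 + s) := by
  rw [le_log_iff_exp_le (by positivity)]
  linarith

/-- The case split is at `s = exp √(a / b)`, beyond which `log² (exp 2 + s) ≥ a / b`. -/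
lemma mul_div_log_sq_le {a b s : ℝ} (ha : 0 ≤ a) (hb : 0 < b) (hs : 0 ≤ s) :
    a * s / log (exp 2 + s) ^ 2 ≤ a * exp √(a / b) + b * s := by
  have hL := two_le_log_exp_two_add hs
  rcases le_total s (exp √(a / b)) with hs₀ | hs₀
  · have : a * s / log (exp 2 + s) ^ 2 ≤ a * s :=
      div_le_self (by positivity) (by nlinarith)
    nlinarith [mul_le_mul_of_nonneg_left hs₀ ha]
  · have hlog : √(a / b) ≤ log (exp 2 + s) := by
      rw [le_log_iff_exp_le (by positivity)]
      linarith [exp_pos 2]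
    have hsq : a / b ≤ log (exp 2 + s) ^ 2 := by
      calc a / b = √(a / b) ^ 2 := (sq_sqrt (by positivity)).symm
        _ ≤ _ := pow_le_pow_left₀ (sqrt_nonneg _) hlog 2
    have : a * s / log (exp 2 + s) ^ 2 ≤ b * s := by
      rw [div_le_iff₀ (by positivity)]
      rw [div_le_iff₀ hb] at hsq
      nlinarith
    nlinarith [exp_pos √(a / b)]

lemma exp_neg_mul_le_mul_eta {a b s : ℝ} (ha : 0 ≤ a) (hb : 0 < b) (hs : 0 ≤ s) :
    exp (-(b * s)) ≤ exp (a * exp √(a / b)) * eta a s := by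
  rw [eta, ← exp_add, exp_le_exp, neg_mul, neg_div]
  linarith [mul_div_log_sq_le ha hb hs]

lemma integral_mul_le_of_le_on_compl {α : Type*} [MeasurableSpace α] {ν : Measure α}
    {f g : α → ℝ} {S : Set α} {B K : ℝ} (hS : MeasurableSet S) (hf : Integrable f ν)
    (hf0 : 0 ≤ f) (hg : AEStronglyMeasurable g ν) (hg0 : 0 ≤ g) (hgB : ∀ x, g x ≤ B)
    (hgK : ∀ x ∈ Sᶜ, g x ≤ K) :
    ∫ x, f x * g x ∂ν ≤ B * ∫ x in S, f x ∂ν + K * ∫ x in Sᶜ, f x ∂ν := by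
  have hfg : Integrable (fun x => f x * g x) ν :=
    hf.mul_bdd hg (.of_forall fun x => by rw [norm_of_nonneg (hg0 x)]; exact hgB x)
  rw [← integral_add_compl hS hfg, ← integral_const_mul, ← integral_const_mul]
  gcongr ?_ + ?_
  · refine setIntegral_mono_on hfg.integrableOn (hf.const_mul B).integrableOn hS fun x _ => ?_
    rw [mul_comm B]
    exact mul_le_mul_of_nonneg_left (hgB x) (hf0 x)
  · refine setIntegral_mono_on hfg.integrableOn (hf.const_mul K).integrableOn hS.compl
      fun x hx => ?_
    rw [mul_comm K]
    exact mul_le_mul_of_nonneg_left (hgK x hx) (hf0 x)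

lemma mul_sub_le_of_abs_le_div {μ v d t : ℝ} (hμ : 0 ≤ μ) (hv : 0 < v)
    (ht : |t| ≤ d / (2 * v)) : μ * (v * |t| - d) ≤ -(μ * v * (d / (2 * v))) := by
  have hvt : v * |t| ≤ d / 2 := by
    calc v * |t| ≤ v * (d / (2 * v)) := by gcongr
      _ = d / 2 := by field_simp
  have : μ * v * (d / (2 * v)) = μ * (d / 2) := by field_simp
  nlinarith

/-- Analytic core of the Lieb-Robinson bound for filtered interactions: if `F` has
`∫|F| ≤ c₂` and tails `∫_{|t'|>t}|F| ≤ c'·η_a(t)`, and `g ≤ min(2M, cM e^{μ(v|t|-d)})`,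
then `∫ |F(t)|g(t) dt ≤ C·M·η_a(d/(2v))` with `C` independent of `d` and `M`. -/
theorem filtered_LR_integral (a c c' c₂ μ v : ℝ)
    (ha : 0 < a) (hc : 0 < c) (hc' : 0 < c') (hc₂ : 0 < c₂) (hμ : 0 < μ) (hv : 0 < v) :
    ∃ C > 0, ∀ (F g : ℝ → ℝ) (M d : ℝ), 0 < M → 0 < d →
      Integrable F →
      (∫ t, |F t|) ≤ c₂ →
      (∀ t : ℝ, 0 ≤ t → (∫ t' in {t' : ℝ | t < |t'|}, |F t'|) ≤
          c' * Real.exp (-a * t / (Real.log (Real.exp 2 + t)) ^ 2)) →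
      Measurable g →
      (∀ t, 0 ≤ g t) →
      (∀ t : ℝ, g t ≤ min (2 * M) (c * M * Real.exp (μ * (v * |t| - d)))) →
      (∫ t, |F t| * g t) ≤
        C * M * Real.exp (-a * (d / (2 * v)) /
          (Real.log (Real.exp 2 + d / (2 * v))) ^ 2) := by
  set E := exp (a * exp √(a / (μ * v)))
  refine ⟨c * c₂ * E + 2 * c', by positivity, ?_⟩
  intro F g M d hM hd hF hFc₂ hFtail hgm hg0 hgb
  set s := d / (2 * v)
  have hs : 0 ≤ s := by positivity
  have hsplit := integral_mul_le_of_le_on_compl (S := {t | s < |t|}) (B := 2 * M)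
    (K := c * M * exp (-(μ * v * s))) (measurableSet_lt measurable_const measurable_abs)
    hF.abs (fun t => abs_nonneg _) hgm.aestronglyMeasurable hg0
    (fun t => (hgb t).trans (min_le_left _ _))
    (fun t ht => (hgb t).trans <| (min_le_right _ _).trans <| by
      gcongr; exact mul_sub_le_of_abs_le_div hμ.le hv (not_lt.mp ht))
  have hfar : ∫ t in {t | s < |t|}, |F t| ≤ c' * eta a s := hFtail s hs
  have hnear : ∫ t in {t | s < |t|}ᶜ, |F t| ≤ c₂ :=
    (setIntegral_le_integral hF.abs (.of_forall fun _ => abs_nonneg _)).trans hFc₂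
  have hdecay : exp (-(μ * v * s)) ≤ E * eta a s :=
    exp_neg_mul_le_mul_eta ha.le (by positivity) hs
  calc ∫ t, |F t| * g t
      ≤ 2 * M * (c' * eta a s) + c * M * exp (-(μ * v * s)) * c₂ := hsplit.trans (by gcongr)
    _ ≤ 2 * M * (c' * eta a s) + c * M * (E * eta a s) * c₂ := by gcongr
    _ = (c * c₂ * E + 2 * c') * M * eta a s := by ring
end

section
/- Let A be an operator on a tensor-product Hilbert space H = H_B ⊗ H_S (finite-dimensional), and define A' = (1/dim(H_S))·(Tr_S A) ⊗ I_S. Suppose that for every unitary U acting only on H_S (i.e., U = I_B ⊗ U_S), ‖[A, U]‖ ≤ δ. Then ‖A - A'‖ ≤ δ, where ‖·‖ is the operator norm. -/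
open scoped Matrix.Norms.L2Operator Kronecker

/-! A finite group can replace the Haar measure: twirling by the unitaries `1 ⊗ U`, with `U`
running over the signed permutation matrices of `S`, sends `A` to `(1/d) • (Tr_S A) ⊗ I_S`.
Averaging over the signs kills the entries off the `S`-diagonal, and averaging over the
permutations makes the diagonal entries uniform. So `A - A'` is the average of
`A - U A U⋆ = [A, U] U⋆`, each of norm at most `δ`. -/

open Matrix Equiv

section SignedPermMatrix

variable {n R : Type*} [Fintype n] [DecidableEq n] [CommRing R]

def signedPermMatrix (ε : n → ℤˣ) (σ : Perm n) : Matrix n n R :=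
  of fun i j => if σ i = j then ((ε i : ℤ) : R) else 0

theorem signedPermMatrix_mul_apply (ε : n → ℤˣ) (σ : Perm n) (M : Matrix n n R) (i j : n) :
    (signedPermMatrix ε σ * M : Matrix n n R) i j = (ε i : ℤ) * M (σ i) j := by
  simp [signedPermMatrix, mul_apply, ite_mul]

theorem mul_star_signedPermMatrix_apply [StarRing R] (ε : n → ℤˣ) (σ : Perm n)
    (M : Matrix n n R) (i j : n) :
    (M * star (signedPermMatrix ε σ) : Matrix n n R) i j = M i (σ j) * (ε j : ℤ) := by
  simp [signedPermMatrix, mul_apply, star_apply, apply_ite star]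

theorem signedPermMatrix_mul_mul_star_apply [StarRing R] (ε : n → ℤˣ) (σ : Perm n)
    (M : Matrix n n R) (i j : n) :
    (signedPermMatrix ε σ * M * star (signedPermMatrix ε σ) : Matrix n n R) i j
      = (ε i : ℤ) * (ε j : ℤ) * M (σ i) (σ j) := by
  rw [mul_star_signedPermMatrix_apply, signedPermMatrix_mul_apply, mul_right_comm]

theorem signedPermMatrix_mem_unitaryGroup [StarRing R] (ε : n → ℤˣ) (σ : Perm n) :
    (signedPermMatrix ε σ : Matrix n n R) ∈ unitaryGroup n R := by
  rw [mem_unitaryGroup_iff]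
  ext i j
  have h := signedPermMatrix_mul_mul_star_apply ε σ (1 : Matrix n n R) i j
  rw [Matrix.mul_one] at h
  rw [h]
  simp only [one_apply, σ.injective.eq_iff]
  split_ifs with hij
  · rw [hij, mul_one, ← Int.cast_mul, Int.isUnit_mul_self (ε j).isUnit, Int.cast_one]
  · rw [mul_zero]

omit [Fintype n] in
theorem one_kronecker_signedPermMatrix {B : Type*} [DecidableEq B] (ε : n → ℤˣ)
    (σ : Perm n) :
    (1 : Matrix B B R) ⊗ₖ signedPermMatrix ε σ
      = signedPermMatrix (fun p => ε p.2) (prodCongr (Equiv.refl B) σ) := by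
  ext ⟨i, s⟩ ⟨j, t⟩
  by_cases hij : i = j <;> simp [signedPermMatrix, one_apply, hij]

theorem sum_pi_units_mul_eq (p q : n) :
    ∑ ε : n → ℤˣ, ((ε p : ℤ) : R) * (ε q : ℤ)
      = if p = q then (Fintype.card (n → ℤˣ) : R) else 0 := by
  split_ifs with hpq
  · subst hpq
    simp [← Int.cast_mul, Int.isUnit_mul_self]
  · -- flipping the sign of `ε q` is a fixed-point-free involution negating the summand
    refine Finset.sum_ninvolution (Pi.mulSingle q (-1) * ·) (fun ε => ?_) (fun ε _ h => ?_)
      (fun _ => Finset.mem_univ _) (fun ε => ?_)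
    · simp [hpq]
    · simpa using congrFun h q
    · rw [← mul_assoc, ← Pi.mulSingle_mul]
      simp

end SignedPermMatrix

theorem card_nsmul_sum_perm_apply {n M : Type*} [Fintype n] [DecidableEq n] [AddCommMonoid M]
    (f : n → M) (s : n) :
    Fintype.card n • ∑ σ : Perm n, f (σ s) = Fintype.card (Perm n) • ∑ u, f u := by
  have hconst : ∀ t, ∑ σ : Perm n, f (σ t) = ∑ σ : Perm n, f (σ s) := fun t =>
    Fintype.sum_equiv (Equiv.mulRight (swap s t)) _ _ (fun σ => by simp [swap_apply_left])
  calc Fintype.card n • ∑ σ : Perm n, f (σ s) = ∑ t, ∑ σ : Perm n, f (σ t) := by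
        simp [hconst]
    _ = ∑ σ : Perm n, ∑ t, f (σ t) := Finset.sum_comm
    _ = Fintype.card (Perm n) • ∑ u, f u := by
        simp [Equiv.sum_comp]

def partialTraceRight {B S R : Type*} [Fintype S] [AddCommMonoid R]
    (A : Matrix (B × S) (B × S) R) : Matrix B B R :=
  of fun i j => ∑ s, A (i, s) (j, s)

theorem card_nsmul_sum_conj_signedPermMatrix {B S R : Type*} [Fintype B] [DecidableEq B]
    [Fintype S] [DecidableEq S] [CommRing R] [StarRing R] (A : Matrix (B × S) (B × S) R) :
    (Fintype.card S • ∑ g : (S → ℤˣ) × Perm S,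
      ((1 : Matrix B B R) ⊗ₖ signedPermMatrix g.1 g.2) * A
        * star ((1 : Matrix B B R) ⊗ₖ signedPermMatrix g.1 g.2) : Matrix (B × S) (B × S) R)
    = Fintype.card ((S → ℤˣ) × Perm S) • (partialTraceRight A ⊗ₖ (1 : Matrix S S R)) := by
  ext ⟨i, s⟩ ⟨j, t⟩
  simp only [one_kronecker_signedPermMatrix, Matrix.smul_apply, Matrix.sum_apply,
    signedPermMatrix_mul_mul_star_apply, Fintype.sum_prod_type, prodCongr_apply,
    Equiv.coe_refl, Prod.map_apply, id_eq]
  rw [Finset.sum_comm]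
  simp only [← Finset.sum_mul, sum_pi_units_mul_eq,
    kroneckerMap_apply, partialTraceRight, of_apply, one_apply]
  split_ifs with hst
  · subst hst
    simp only [mul_one, ← Finset.mul_sum, Fintype.card_prod]
    rw [mul_smul, ← card_nsmul_sum_perm_apply (fun u => A (i, u) (j, u)) s, ← nsmul_eq_mul,
      smul_comm]
  · simp

theorem norm_sub_average_conj_le {𝕜 E ι : Type*} [RCLike 𝕜] [NormedRing E] [StarRing E]
    [CStarRing E] [NormedAlgebra 𝕜 E] [Fintype ι] [Nonempty ι] (a : E) (u : ι → E)
    (hu : ∀ i, u i ∈ unitary E) {δ : ℝ} (h : ∀ i, ‖a * u i - u i * a‖ ≤ δ) :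
    ‖a - (Fintype.card ι : 𝕜)⁻¹ • ∑ i, u i * a * star (u i)‖ ≤ δ := by
  have hc : (Fintype.card ι : 𝕜) ≠ 0 := Nat.cast_ne_zero.2 Fintype.card_ne_zero
  have hterm : ∀ i, a - u i * a * star (u i) = (a * u i - u i * a) * star (u i) := fun i => by
    rw [sub_mul, mul_assoc a, Unitary.mul_star_self_of_mem (hu i), mul_one]
  have hsplit : a - (Fintype.card ι : 𝕜)⁻¹ • ∑ i, u i * a * star (u i)
      = (Fintype.card ι : 𝕜)⁻¹ • ∑ i, (a - u i * a * star (u i)) := by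
    rw [Finset.sum_sub_distrib, smul_sub, Finset.sum_const, Finset.card_univ,
      ← Nat.cast_smul_eq_nsmul 𝕜, smul_smul, inv_mul_cancel₀ hc, one_smul]
  have hsum : ‖∑ i, (a - u i * a * star (u i))‖ ≤ Fintype.card ι * δ := by
    refine (norm_sum_le_of_le Finset.univ fun i _ => ?_).trans_eq
      (by rw [Finset.sum_const, Finset.card_univ, nsmul_eq_mul])
    rw [hterm, CStarRing.norm_mul_mem_unitary _ (Unitary.star_mem (hu i))]
    exact h i
  rw [hsplit, norm_smul, norm_inv, RCLike.norm_natCast, inv_mul_le_iff₀ (by positivity)]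
  exact hsum

/-- Haar-averaging / partial-trace approximation: if an operator `A` on `H_B ⊗ H_S`
almost commutes (up to `δ` in operator norm) with every unitary supported on `S`,
then `A` is `δ`-close to `A' = (1/dim H_S)·(Tr_S A) ⊗ I_S`. -/
theorem partial_trace_approximation
    {B S : Type*} [Fintype B] [Fintype S] [DecidableEq B] [DecidableEq S] [Nonempty S]
    (A : Matrix (B × S) (B × S) ℂ) (δ : ℝ)
    (hδ : ∀ US : Matrix S S ℂ, US ∈ Matrix.unitaryGroup S ℂ →
      ‖A * ((1 : Matrix B B ℂ) ⊗ₖ US) - ((1 : Matrix B B ℂ) ⊗ₖ US) * A‖ ≤ δ) :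
    ‖A - (1 / (Fintype.card S : ℂ)) •
        ((Matrix.of fun i j : B => ∑ s : S, A (i, s) (j, s)) ⊗ₖ (1 : Matrix S S ℂ))‖
      ≤ δ := by
  let U : (S → ℤˣ) × Perm S → Matrix (B × S) (B × S) ℂ :=
    fun g => (1 : Matrix B B ℂ) ⊗ₖ signedPermMatrix g.1 g.2
  have hU : ∀ g, U g ∈ unitary (Matrix (B × S) (B × S) ℂ) := fun g => by
    simp only [U, one_kronecker_signedPermMatrix]
    exact signedPermMatrix_mem_unitaryGroup _ _
  have htwirl : (Fintype.card ((S → ℤˣ) × Perm S) : ℂ)⁻¹ • ∑ g, U g * A * star (U g)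
      = (1 / (Fintype.card S : ℂ)) • (partialTraceRight A ⊗ₖ (1 : Matrix S S ℂ)) := by
    have h := card_nsmul_sum_conj_signedPermMatrix (B := B) A
    rw [← Nat.cast_smul_eq_nsmul ℂ, ← Nat.cast_smul_eq_nsmul ℂ] at h
    rw [inv_smul_eq_iff₀ (Nat.cast_ne_zero.2 Fintype.card_ne_zero), one_div, smul_comm,
      eq_inv_smul_iff₀ (Nat.cast_ne_zero.2 Fintype.card_ne_zero)]
    exact h
  have h := norm_sub_average_conj_le (𝕜 := ℂ) A U hU
    fun g => hδ _ (signedPermMatrix_mem_unitaryGroup g.1 g.2)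
  rwa [htwirl] at h
end
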